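/- arXiv:2202.01555 — 3 statements merged into one kernel-verified Lean document; each statement's English description precedes it below -/
import Mathlib

section
/- Let (φ_n) be an orthonormal system on [0,1] with ∫_0^1 φ_n(x) dx = 0 for every n ≥ 1, and let (d_k) be a bounded sequence of positive real numbers. Suppose that for every sequence ε = (ε_n) with ε_n ∈ {-1,0,1} there exists a constant M(ε) such that D_N(ε) ≤ M(ε) for all N ≥ 2. Then for every function f ∈ Lip1 on [0,1] the series Σ_{k=1}^∞ |c_k(f)| · k^{1/2} · d_k converges. -/
open MeasureTheory Set Filter

noncomputable section

/-- `φ` is an orthonormal system on `[0,1]` (indexed by `n ≥ 1`). -/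
def IsONS (φ : ℕ → ℝ → ℝ) : Prop :=
  (∀ n, 1 ≤ n → MemLp (φ n) 2 (volume.restrict (Icc (0:ℝ) 1))) ∧
  ∀ n m, 1 ≤ n → 1 ≤ m →
    (∫ x in (0:ℝ)..1, φ n x * φ m x) = if n = m then 1 else 0

/-- `f` belongs to the class Lip 1 on `[0,1]`. -/
def Lip1 (f : ℝ → ℝ) : Prop :=
  ∃ M > (0:ℝ), ∀ x ∈ Icc (0:ℝ) 1, ∀ y ∈ Icc (0:ℝ) 1, |f x - f y| ≤ M * |x - y|

/-- `Q_N(x, ε) = ∑_{k=1}^N d_k k^{1/2} ε_k φ_k(x)`. -/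
def QN (φ : ℕ → ℝ → ℝ) (d ε : ℕ → ℝ) (N : ℕ) (x : ℝ) : ℝ :=
  ∑ k ∈ Finset.Icc 1 N, d k * Real.sqrt k * ε k * φ k x

/-- `D_N(ε) = (1/N) ∑_{i=1}^{N-1} |∫_0^{i/N} Q_N(x, ε) dx|`. -/
def DN (φ : ℕ → ℝ → ℝ) (d ε : ℕ → ℝ) (N : ℕ) : ℝ :=
  (1 / (N:ℝ)) * ∑ i ∈ Finset.Icc 1 (N - 1), |∫ x in (0:ℝ)..((i:ℝ)/(N:ℝ)), QN φ d ε N x|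


/-!
Let `K` be a Lipschitz constant of `f`, `C` a bound for `d`, and take `ε_k = sign c_k(f)`, so that
`∑_{k ≤ N} |c_k| √k d_k = ∫₀¹ f Q_N` with `Q_N = Q_N(·, ε)`. Cut `[0,1]` at the points `i/N`.
On each piece `f` differs from `f(i/N)` by at most `K/N`, which costs
`(K/N) ∫₀¹ |Q_N| ≤ (K/N) ‖Q_N‖₂ ≤ K C`, since orthonormality gives
`‖Q_N‖₂² = ∑ d_k² k ε_k² ≤ C² N²`.
The remaining Riemann–Stieltjes sum `∑ f(i/N) (G(i+1) - G(i))`, with `G(i) = ∫₀^{i/N} Q_N`, is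
summed by parts: `G(0) = 0`, and `G(N) = 0` because every `φ_k` has mean zero, so it is at most
`(K/N) ∑_{0<i<N} |G(i)| = K D_N(ε)`. The partial sums of the series are therefore bounded by
`K C + K M(ε)`.
-/

open scoped NNReal ENNReal

theorem abs_sum_mul_sub_le_of_boundary_eq_zero {u G : ℕ → ℝ} {N : ℕ} {δ : ℝ}
    (hG0 : G 0 = 0) (hGN : G N = 0) (hu : ∀ i < N, |u (i + 1) - u i| ≤ δ) :
    |∑ i ∈ Finset.range N, u i * (G (i + 1) - G i)|
      ≤ δ * ∑ i ∈ Finset.Icc 1 (N - 1), |G i| := by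
  have summation_by_parts : ∑ i ∈ Finset.range N, u i * (G (i + 1) - G i)
      = -∑ i ∈ Finset.range N, (u (i + 1) - u i) * G (i + 1) := by
    have htel := Finset.sum_range_sub (fun i => u i * G i) N
    simp only [hG0, hGN, mul_zero, sub_zero] at htel
    rw [← sub_eq_zero, sub_neg_eq_add, ← Finset.sum_add_distrib, ← htel]
    exact Finset.sum_congr rfl fun i _ => by ring
  cases N with
  | zero => simp
  | succ n =>
    rw [summation_by_parts, abs_neg, Finset.sum_range_succ, hGN, mul_zero, add_zero,
      Nat.add_sub_cancel, Finset.mul_sum, ← Finset.Ico_add_one_right_eq_Icc,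
      Finset.sum_Ico_eq_sum_range, Nat.add_sub_cancel]
    refine (Finset.abs_sum_le_sum_abs _ _).trans (Finset.sum_le_sum fun i hi => ?_)
    rw [abs_mul, add_comm 1 i]
    exact mul_le_mul_of_nonneg_right (hu i (by simp at hi; omega)) (abs_nonneg _)

theorem intervalIntegral_abs_le_of_integral_sq_le {g : ℝ → ℝ} {A : ℝ} (hA : 0 < A)
    (hg : IntervalIntegrable g volume 0 1)
    (hg2 : IntervalIntegrable (fun x => g x ^ 2) volume 0 1)
    (h : ∫ x in (0:ℝ)..1, g x ^ 2 ≤ A ^ 2) :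
    ∫ x in (0:ℝ)..1, |g x| ≤ A := by
  have amgm (t : ℝ) : |t| ≤ A / 2 + (2 * A)⁻¹ * t ^ 2 := by
    have := two_mul_le_add_sq A |t|
    rw [sq_abs] at this
    rw [← sub_nonneg]
    have : 0 ≤ (A ^ 2 + t ^ 2 - 2 * A * |t|) / (2 * A) := by positivity
    convert this using 1
    field_simp
  calc ∫ x in (0:ℝ)..1, |g x|
      ≤ ∫ x in (0:ℝ)..1, (A / 2 + (2 * A)⁻¹ * g x ^ 2) :=
        intervalIntegral.integral_mono_on zero_le_one hg.abs
          (intervalIntegrable_const.add (hg2.const_mul _)) fun x _ => amgm (g x)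
    _ = A / 2 + (2 * A)⁻¹ * ∫ x in (0:ℝ)..1, g x ^ 2 := by
        rw [intervalIntegral.integral_add intervalIntegrable_const (hg2.const_mul _),
          intervalIntegral.integral_const_mul]
        simp
    _ ≤ A / 2 + (2 * A)⁻¹ * A ^ 2 := by gcongr
    _ = A := by field_simp; ring

theorem intervalIntegral.integral_mul_finset_sum {g : ℝ → ℝ} {ψ : ℕ → ℝ → ℝ} {s : Finset ℕ}
    {a b : ℝ} (c : ℕ → ℝ) (h : ∀ k ∈ s, IntervalIntegrable (fun x => g x * ψ k x) volume a b) :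
    ∫ x in a..b, g x * ∑ k ∈ s, c k * ψ k x = ∑ k ∈ s, c k * ∫ x in a..b, g x * ψ k x := by
  simp_rw [Finset.mul_sum, mul_left_comm (g _)]
  rw [intervalIntegral.integral_finsetSum fun k hk => (h k hk).const_mul (c k)]
  simp_rw [intervalIntegral.integral_const_mul]

theorem MeasureTheory.MemLp.intervalIntegrable {g : ℝ → ℝ} {a b : ℝ} (hab : a ≤ b)
    {p : ℝ≥0∞} (hp : 1 ≤ p) (hg : MemLp g p (volume.restrict (Icc a b))) :
    IntervalIntegrable g volume a b :=
  IntegrableOn.intervalIntegrable (by rw [uIcc_of_le hab]; exact hg.integrable hp)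

theorem abs_integral_sub_mul_le_of_lipschitzOnWith {f Q : ℝ → ℝ} {K : ℝ≥0} {a b : ℝ}
    (hab : a ≤ b) (hf : LipschitzOnWith K f (Icc a b)) (hQ : IntervalIntegrable Q volume a b) :
    |∫ x in a..b, (f x - f a) * Q x| ≤ K * (b - a) * ∫ x in a..b, |Q x| := by
  have hfa : ContinuousOn (fun x => f x - f a) (uIcc a b) := by
    rw [uIcc_of_le hab]
    exact hf.continuousOn.sub continuousOn_const
  refine (intervalIntegral.abs_integral_le_integral_abs hab).trans ?_
  rw [← intervalIntegral.integral_const_mul]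
  refine intervalIntegral.integral_mono_on hab (hQ.continuousOn_mul hfa).abs
    (hQ.abs.const_mul _) fun x hx => ?_
  have hdist := hf.dist_le_mul x hx a (left_mem_Icc.mpr hab)
  rw [Real.dist_eq, Real.dist_eq, abs_of_nonneg (sub_nonneg.mpr hx.1)] at hdist
  rw [abs_mul]
  gcongr
  exact hdist.trans (by gcongr; exact hx.2)

theorem abs_integral_mul_le_of_lipschitzOnWith {f Q : ℝ → ℝ} {K : ℝ≥0}
    (hf : LipschitzOnWith K f (Icc 0 1)) (hQ : IntervalIntegrable Q volume 0 1)
    (hQ0 : ∫ x in (0:ℝ)..1, Q x = 0) {N : ℕ} (hN : 0 < N) :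
    |∫ x in (0:ℝ)..1, f x * Q x| ≤ K / N * (∫ x in (0:ℝ)..1, |Q x|)
      + K / N * ∑ i ∈ Finset.Icc 1 (N - 1), |∫ x in (0:ℝ)..(i / N : ℝ), Q x| := by
  set t : ℕ → ℝ := fun i => i / N
  set G : ℕ → ℝ := fun i => ∫ x in (0:ℝ)..t i, Q x
  have hN' : (0:ℝ) < N := by exact_mod_cast hN
  have ht_mem {i : ℕ} (hi : i ≤ N) : t i ∈ Icc (0:ℝ) 1 :=
    ⟨by positivity, div_le_one_of_le₀ (by exact_mod_cast hi) hN'.le⟩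
  have ht_step (i : ℕ) : t (i + 1) - t i = 1 / N := by simp only [t]; push_cast; ring
  have ht_mono (i : ℕ) : t i ≤ t (i + 1) := by linarith [ht_step i, one_div_pos.mpr hN']
  have hpiece_sub {i : ℕ} (hi : i < N) : Icc (t i) (t (i + 1)) ⊆ Icc 0 1 :=
    Icc_subset_Icc (ht_mem hi.le).1 (ht_mem (i := i + 1) hi).2
  have hsub {g : ℝ → ℝ} (hg : IntervalIntegrable g volume 0 1) {a b : ℝ}
      (ha : a ∈ Icc (0:ℝ) 1) (hb : b ∈ Icc (0:ℝ) 1) : IntervalIntegrable g volume a b := by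
    rw [← uIcc_of_le zero_le_one] at ha hb
    exact hg.mono_set (uIcc_subset_uIcc ha hb)
  have hpiece {g : ℝ → ℝ} (hg : IntervalIntegrable g volume 0 1) {i : ℕ} (hi : i < N) :
      IntervalIntegrable g volume (t i) (t (i + 1)) :=
    hsub hg (ht_mem hi.le) (ht_mem (i := i + 1) hi)
  have hsum {g : ℝ → ℝ} (hg : IntervalIntegrable g volume 0 1) :
      ∑ i ∈ Finset.range N, ∫ x in t i..t (i + 1), g x = ∫ x in (0:ℝ)..1, g x := by
    rw [intervalIntegral.sum_integral_adjacent_intervals (a := t) fun i hi => hpiece hg hi]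
    simp [t, hN'.ne']
  have hf_cont : ContinuousOn f (uIcc 0 1) := by
    rw [uIcc_of_le zero_le_one]
    exact hf.continuousOn
  have hsplit : ∀ i < N, ∫ x in t i..t (i + 1), f x * Q x
      = (∫ x in t i..t (i + 1), (f x - f (t i)) * Q x) + f (t i) * (G (i + 1) - G i) := by
    intro i hi
    have h0 : (0:ℝ) ∈ Icc (0:ℝ) 1 := left_mem_Icc.mpr zero_le_one
    have hfQ : IntervalIntegrable (fun x => (f x - f (t i)) * Q x) volume (t i) (t (i + 1)) :=
      hpiece (hQ.continuousOn_mul (hf_cont.sub continuousOn_const)) hi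
    rw [intervalIntegral.integral_interval_sub_left (hsub hQ h0 (ht_mem (i := i + 1) hi))
        (hsub hQ h0 (ht_mem hi.le)), ← intervalIntegral.integral_const_mul,
      ← intervalIntegral.integral_add hfQ ((hpiece hQ hi).const_mul _)]
    simp only [sub_mul, sub_add_cancel]
  have hosc : ∀ i < N, |∫ x in t i..t (i + 1), (f x - f (t i)) * Q x|
      ≤ K / N * ∫ x in t i..t (i + 1), |Q x| := by
    intro i hi
    have := abs_integral_sub_mul_le_of_lipschitzOnWith (ht_mono i) (hf.mono (hpiece_sub hi))
      (hpiece hQ hi)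
    rwa [ht_step, ← div_eq_mul_one_div] at this
  have habel := abs_sum_mul_sub_le_of_boundary_eq_zero (u := fun i => f (t i)) (G := G)
    (N := N) (δ := K / N) (by simp [G, t]) (by simpa [G, t, hN'.ne'] using hQ0) fun i hi => by
      have := hf.dist_le_mul _ (ht_mem (i := i + 1) hi) _ (ht_mem hi.le)
      rwa [Real.dist_eq, Real.dist_eq, ht_step, abs_of_pos (one_div_pos.mpr hN'),
        ← div_eq_mul_one_div] at this
  calc |∫ x in (0:ℝ)..1, f x * Q x|
      = |(∑ i ∈ Finset.range N, ∫ x in t i..t (i + 1), (f x - f (t i)) * Q x)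
          + ∑ i ∈ Finset.range N, f (t i) * (G (i + 1) - G i)| := by
        rw [← hsum (hQ.continuousOn_mul hf_cont), ← Finset.sum_add_distrib,
          Finset.sum_congr rfl fun i hi => hsplit i (Finset.mem_range.mp hi)]
    _ ≤ (∑ i ∈ Finset.range N, K / N * ∫ x in t i..t (i + 1), |Q x|)
          + K / N * ∑ i ∈ Finset.Icc 1 (N - 1), |G i| :=
        (abs_add_le _ _).trans (add_le_add ((Finset.abs_sum_le_sum_abs _ _).trans
          (Finset.sum_le_sum fun i hi => hosc i (Finset.mem_range.mp hi))) habel)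
    _ = _ := by rw [← Finset.mul_sum, hsum hQ.abs]

namespace IsONS

variable {φ : ℕ → ℝ → ℝ} {s : Finset ℕ}

theorem intervalIntegrable (hφ : IsONS φ) {n : ℕ} (hn : 1 ≤ n) :
    IntervalIntegrable (φ n) volume 0 1 :=
  (hφ.1 n hn).intervalIntegrable zero_le_one one_le_two

theorem memLp_sum (hφ : IsONS φ) (hs : ∀ k ∈ s, 1 ≤ k) (a : ℕ → ℝ) :
    MemLp (fun x => ∑ k ∈ s, a k * φ k x) 2 (volume.restrict (Icc 0 1)) :=
  memLp_finsetSum s fun k hk => (hφ.1 k (hs k hk)).const_mul (a k)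

theorem integral_sum_sq (hφ : IsONS φ) (hs : ∀ k ∈ s, 1 ≤ k) (a : ℕ → ℝ) :
    ∫ x in (0:ℝ)..1, (∑ k ∈ s, a k * φ k x) ^ 2 = ∑ k ∈ s, a k ^ 2 := by
  have hprod {g : ℝ → ℝ} (hg : MemLp g 2 (volume.restrict (Icc 0 1))) {k : ℕ} (hk : k ∈ s) :
      IntervalIntegrable (fun x => g x * φ k x) volume 0 1 :=
    MemLp.intervalIntegrable zero_le_one le_rfl ((hφ.1 k (hs k hk)).mul hg (r := 1))
  simp_rw [sq]
  rw [intervalIntegral.integral_mul_finset_sum a fun k hk => hprod (hφ.memLp_sum hs a) hk]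
  refine Finset.sum_congr rfl fun k hk => congrArg (a k * ·) ?_
  simp_rw [mul_comm (∑ j ∈ s, _) (φ k _)]
  rw [intervalIntegral.integral_mul_finset_sum a fun j hj => hprod (hφ.1 k (hs k hk)) hj]
  calc ∑ j ∈ s, a j * ∫ x in (0:ℝ)..1, φ k x * φ j x
      = ∑ j ∈ s, a j * if k = j then 1 else 0 :=
        Finset.sum_congr rfl fun j hj => by rw [hφ.2 k j (hs k hk) (hs j hj)]
    _ = a k := by simp [hk]

end IsONS

theorem Lip1.exists_lipschitzOnWith {f : ℝ → ℝ} (hf : Lip1 f) :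
    ∃ K : ℝ≥0, LipschitzOnWith K f (Icc 0 1) := by
  obtain ⟨M, hM, hlip⟩ := hf
  refine ⟨M.toNNReal, LipschitzOnWith.of_dist_le_mul fun x hx y hy => ?_⟩
  simpa [Real.dist_eq, Real.coe_toNNReal M hM.le] using hlip x hx y hy

theorem IsONS.sum_abs_integral_mul_sqrt_mul_le {φ : ℕ → ℝ → ℝ} (hφ : IsONS φ)
    (hzero : ∀ n, 1 ≤ n → ∫ x in (0:ℝ)..1, φ n x = 0) {d : ℕ → ℝ} {C : ℝ} (hC : 0 < C)
    (hd : ∀ k, |d k| ≤ C) {f : ℝ → ℝ} {K : ℝ≥0} (hf : LipschitzOnWith K f (Icc 0 1)) {N : ℕ}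
    (hN : 0 < N) :
    ∑ k ∈ Finset.Icc 1 N, |∫ x in (0:ℝ)..1, f x * φ k x| * √k * d k
      ≤ K * C + K * DN φ d (fun k => SignType.sign (∫ x in (0:ℝ)..1, f x * φ k x)) N := by
  set ε : ℕ → ℝ := fun k => SignType.sign (∫ x in (0:ℝ)..1, f x * φ k x)
  set Q := QN φ d ε N
  have hQ (x : ℝ) : Q x = ∑ k ∈ Finset.Icc 1 N, (d k * √k * ε k) * φ k x := rfl
  have hs : ∀ k ∈ Finset.Icc 1 N, 1 ≤ k := fun k hk => (Finset.mem_Icc.mp hk).1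
  have hQ_mem : MemLp Q 2 (volume.restrict (Icc 0 1)) := hφ.memLp_sum hs _
  have hQ_int : IntervalIntegrable Q volume 0 1 :=
    hQ_mem.intervalIntegrable zero_le_one one_le_two
  have hQ_sq_int : IntervalIntegrable (fun x => Q x ^ 2) volume 0 1 :=
    IntegrableOn.intervalIntegrable (by rw [uIcc_of_le zero_le_one]; exact hQ_mem.integrable_sq)
  have hQ_sq : ∫ x in (0:ℝ)..1, Q x ^ 2 ≤ (C * N) ^ 2 := by
    simp only [hQ, hφ.integral_sum_sq hs]
    calc ∑ k ∈ Finset.Icc 1 N, (d k * √k * ε k) ^ 2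
        ≤ ∑ k ∈ Finset.Icc 1 N, C ^ 2 * N := Finset.sum_le_sum fun k hk => by
          have hε : ε k ^ 2 ≤ 1 := by
            rcases (SignType.sign (∫ x in (0:ℝ)..1, f x * φ k x)).trichotomy with h | h | h <;>
              simp [ε, h]
          have hkN : (k : ℝ) ≤ N := by exact_mod_cast (Finset.mem_Icc.mp hk).2
          rw [mul_pow, mul_pow, Real.sq_sqrt k.cast_nonneg]
          have hdC : d k ^ 2 ≤ C ^ 2 := sq_le_sq' (abs_le.mp (hd k)).1 (abs_le.mp (hd k)).2
          calc d k ^ 2 * k * ε k ^ 2 ≤ C ^ 2 * N * 1 := by gcongr ?_ * ?_ * ?_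
            _ = C ^ 2 * N := mul_one _
      _ = (C * N) ^ 2 := by simp; ring
  have hQ_L1 : ∫ x in (0:ℝ)..1, |Q x| ≤ C * N :=
    intervalIntegral_abs_le_of_integral_sq_le (by positivity) hQ_int hQ_sq_int hQ_sq
  have hQ_mean : ∫ x in (0:ℝ)..1, Q x = 0 := by
    calc ∫ x in (0:ℝ)..1, Q x = ∫ x in (0:ℝ)..1, 1 * Q x := by simp
      _ = 0 := by
        simp only [hQ]
        rw [intervalIntegral.integral_mul_finset_sum _ fun k hk => by
          simpa using hφ.intervalIntegrable (hs k hk)]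
        exact Finset.sum_eq_zero fun k hk => by simp [hzero k (hs k hk)]
  have hfQ : ∫ x in (0:ℝ)..1, f x * Q x
      = ∑ k ∈ Finset.Icc 1 N, |∫ x in (0:ℝ)..1, f x * φ k x| * √k * d k := by
    simp only [hQ]
    rw [intervalIntegral.integral_mul_finset_sum _ fun k hk =>
      (hφ.intervalIntegrable (hs k hk)).continuousOn_mul
        (by rw [uIcc_of_le zero_le_one]; exact hf.continuousOn)]
    refine Finset.sum_congr rfl fun k _ => ?_
    rw [← sign_mul_self]
    ring
  have hN' : (0:ℝ) < N := by exact_mod_cast hN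
  calc ∑ k ∈ Finset.Icc 1 N, |∫ x in (0:ℝ)..1, f x * φ k x| * √k * d k
      ≤ |∫ x in (0:ℝ)..1, f x * Q x| := hfQ ▸ le_abs_self _
    _ ≤ K / N * (∫ x in (0:ℝ)..1, |Q x|)
          + K / N * ∑ i ∈ Finset.Icc 1 (N - 1), |∫ x in (0:ℝ)..(i / N : ℝ), Q x| :=
        abs_integral_mul_le_of_lipschitzOnWith hf hQ_int hQ_mean hN
    _ = K / N * (∫ x in (0:ℝ)..1, |Q x|) + K * DN φ d ε N := by rw [DN]; ring
    _ ≤ K / N * (C * N) + K * DN φ d ε N := by gcongr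
    _ = K * C + K * DN φ d ε N := by field_simp

theorem statement0 (φ : ℕ → ℝ → ℝ) (hONS : IsONS φ)
    (hzero : ∀ n, 1 ≤ n → (∫ x in (0:ℝ)..1, φ n x) = 0)
    (d : ℕ → ℝ) (hdpos : ∀ k, 0 < d k) (hdbd : ∃ C : ℝ, ∀ k, d k ≤ C)
    (hD : ∀ ε : ℕ → ℝ, (∀ n, ε n = -1 ∨ ε n = 0 ∨ ε n = 1) →
      ∃ M : ℝ, ∀ N, 2 ≤ N → DN φ d ε N ≤ M)
    (f : ℝ → ℝ) (hf : Lip1 f) :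
    Summable (fun k : ℕ =>
      |∫ x in (0:ℝ)..1, f x * φ (k + 1) x| * Real.sqrt ((k:ℝ) + 1) * d (k + 1)) := by
  obtain ⟨K, hK⟩ := hf.exists_lipschitzOnWith
  obtain ⟨C, hC⟩ := hdbd
  obtain ⟨M, hM⟩ := hD (fun k => SignType.sign (∫ x in (0:ℝ)..1, f x * φ k x)) fun n => by
    rcases (SignType.sign (∫ x in (0:ℝ)..1, f x * φ n x)).trichotomy with h | h | h <;> simp [h]
  set a : ℕ → ℝ := fun k => |∫ x in (0:ℝ)..1, f x * φ k x| * √k * d k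
  have ha : ∀ k, 0 ≤ a k := fun k => mul_nonneg (by positivity) (hdpos k).le
  have hpartial (N : ℕ) : ∑ k ∈ Finset.range N, a (k + 1) = ∑ k ∈ Finset.Icc 1 N, a k := by
    rw [← Finset.Ico_add_one_right_eq_Icc, Finset.sum_Ico_eq_sum_range, Nat.add_sub_cancel]
    simp only [add_comm 1]
  refine summable_of_sum_range_le (c := K * C + K * M) (fun k => by exact_mod_cast ha (k + 1))
    fun n => ?_
  calc _ = ∑ k ∈ Finset.range n, a (k + 1) := by simp [a]
    _ ≤ ∑ k ∈ Finset.range (n + 2), a (k + 1) :=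
        Finset.sum_le_sum_of_subset_of_nonneg (Finset.range_mono (by omega)) fun k _ _ => ha _
    _ ≤ K * C + K * DN φ d _ (n + 2) := hpartial (n + 2) ▸
        hONS.sum_abs_integral_mul_sqrt_mul_le hzero ((hdpos 0).trans_le (hC 0))
          (fun k => (abs_of_pos (hdpos k)).trans_le (hC k)) hK (by omega)
    _ ≤ K * C + K * M := by gcongr; exact hM _ (by omega)
end
end

section
/- Let Q ∈ L²(0,1) and let n ≥ 2 be an integer. Let E_n be the set of indices i ∈ {1,…,n−1} for which there exists t ∈ [(i−1)/n, i/n] with sign(∫_0^t Q(x) dx) ≠ sign(∫_0^{i/n} Q(x) dx). Then Σ_{i∈E_n} |∫_0^{i/n} Q(x) dx| ≤ (∫_0^1 Q(x)² dx)^{1/2}. -/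
/-!
Write `F t = ∫₀ᵗ Q`. If `F` takes a sign different from that of `F (i/n)` at some `t` in the
cell `[(i-1)/n, i/n]`, then `|F (i/n)| ≤ |F (i/n) - F t| = |∫ₜ^{i/n} Q|`, which Cauchy–Schwarz
bounds by `n^{-1/2} (∫_{cell i} Q²)^{1/2}`. Summing over the at most `n` such cells, the
discrete Cauchy–Schwarz inequality and the disjointness of the cells give `(∫₀¹ Q²)^{1/2}`.
-/

open MeasureTheory Set Filter

theorem Real.abs_le_abs_sub_of_sign_ne {a c : ℝ} (h : Real.sign a ≠ Real.sign c) :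
    |c| ≤ |c - a| := by
  have hac : a * c ≤ 0 := by
    by_contra! hac
    rcases mul_pos_iff.1 hac with ⟨ha, hc⟩ | ⟨ha, hc⟩
    · exact h (by rw [Real.sign_of_pos ha, Real.sign_of_pos hc])
    · exact h (by rw [Real.sign_of_neg ha, Real.sign_of_neg hc])
  exact sq_le_sq.1 (by nlinarith)

theorem integral_abs_le_sqrt_measureReal_mul_sqrt {α : Type*} [MeasurableSpace α]
    {μ : Measure α} [IsFiniteMeasure μ] {f : α → ℝ} (hf : MemLp f 2 μ) :
    ∫ x, |f x| ∂μ ≤ √(μ.real univ) * √(∫ x, f x ^ 2 ∂μ) := by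
  have hholder := integral_mul_le_Lp_mul_Lq_of_nonneg Real.HolderConjugate.two_two
    (Eventually.of_forall fun _ => zero_le_one)
    (Eventually.of_forall fun x => abs_nonneg (f x))
    (memLp_const (1 : ℝ)) (by simpa [Real.norm_eq_abs] using hf.norm)
  simpa [Real.sqrt_eq_rpow, sq_abs] using hholder

theorem abs_intervalIntegral_le_sqrt_mul_sqrt {f : ℝ → ℝ} {a b : ℝ} (hab : a ≤ b)
    (hf : MemLp f 2 (volume.restrict (Ioc a b))) :
    |∫ x in a..b, f x| ≤ √(b - a) * √(∫ x in a..b, f x ^ 2) := by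
  have : IsFiniteMeasure (volume.restrict (Ioc a b)) := by
    rw [isFiniteMeasure_restrict]; exact measure_Ioc_lt_top.ne
  rw [intervalIntegral.integral_of_le hab, intervalIntegral.integral_of_le hab]
  calc |∫ x in Ioc a b, f x| ≤ ∫ x in Ioc a b, |f x| := abs_integral_le_integral_abs
    _ ≤ _ := by
      simpa [Measure.real, hab] using integral_abs_le_sqrt_measureReal_mul_sqrt hf

theorem MeasureTheory.IntegrableOn.intervalIntegrable_of_mem_Icc {f : ℝ → ℝ}
    {μ : Measure ℝ} {a b x y : ℝ} (hf : IntegrableOn f (Icc a b) μ) (hx : x ∈ Icc a b)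
    (hy : y ∈ Icc a b) :
    IntervalIntegrable f μ x y :=
  (hf.mono_set (uIcc_subset_Icc hx hy)).intervalIntegrable

theorem abs_intervalIntegral_le_of_sign_ne {Q : ℝ → ℝ} {u a t s : ℝ}
    (hQ : MemLp Q 2 (volume.restrict (Icc u s))) (hua : u ≤ a) (hat : a ≤ t) (hts : t ≤ s)
    (hsign : Real.sign (∫ x in u..t, Q x) ≠ Real.sign (∫ x in u..s, Q x)) :
    |∫ x in u..s, Q x| ≤ √(s - a) * √(∫ x in a..s, Q x ^ 2) := by
  have hu : u ∈ Icc u s := ⟨le_rfl, hua.trans (hat.trans hts)⟩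
  have ha : a ∈ Icc u s := ⟨hua, hat.trans hts⟩
  have ht : t ∈ Icc u s := ⟨hua.trans hat, hts⟩
  have hs : s ∈ Icc u s := ⟨hu.2, le_rfl⟩
  have hQ1 : IntegrableOn Q (Icc u s) := hQ.integrable one_le_two
  have hQ2 : IntegrableOn (fun x => Q x ^ 2) (Icc u s) := hQ.integrable_sq
  have hsub : (∫ x in u..s, Q x) - ∫ x in u..t, Q x = ∫ x in t..s, Q x :=
    intervalIntegral.integral_interval_sub_left (hQ1.intervalIntegrable_of_mem_Icc hu hs)
      (hQ1.intervalIntegrable_of_mem_Icc hu ht)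
  have htail : ∫ x in t..s, Q x ^ 2 ≤ ∫ x in a..s, Q x ^ 2 :=
    intervalIntegral.integral_mono_interval hat hts le_rfl
      (Eventually.of_forall fun x => sq_nonneg (Q x))
      (hQ2.intervalIntegrable_of_mem_Icc ha hs)
  have hQts : MemLp Q 2 (volume.restrict (Ioc t s)) :=
    hQ.mono_measure (Measure.restrict_mono (Ioc_subset_Icc_self.trans
      (Icc_subset_Icc ht.1 le_rfl)) le_rfl)
  calc |∫ x in u..s, Q x| ≤ |∫ x in t..s, Q x| := hsub ▸ Real.abs_le_abs_sub_of_sign_ne hsign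
    _ ≤ √(s - t) * √(∫ x in t..s, Q x ^ 2) := abs_intervalIntegral_le_sqrt_mul_sqrt hts hQts
    _ ≤ √(s - a) * √(∫ x in a..s, Q x ^ 2) := by gcongr

theorem natCast_div_natCast_mem_Icc {k n : ℕ} (hkn : k ≤ n) :
    (k / n : ℝ) ∈ Icc (0 : ℝ) 1 :=
  ⟨by positivity, div_le_one_of_le₀ (by exact_mod_cast hkn) n.cast_nonneg⟩

theorem sum_intervalIntegral_Icc_div {f : ℝ → ℝ} (hf : IntegrableOn f (Icc 0 1)) {m n : ℕ}
    (hmn : m ≤ n) :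
    ∑ k ∈ Finset.Icc 1 m, ∫ x in ((k : ℝ) - 1) / n..(k : ℝ) / n, f x =
      ∫ x in 0..(m : ℝ) / n, f x := by
  induction m with
  | zero => simp
  | succ m ih =>
    have h0 := natCast_div_natCast_mem_Icc (Nat.zero_le n)
    have hm := natCast_div_natCast_mem_Icc (m.le_succ.trans hmn)
    have hm1 := natCast_div_natCast_mem_Icc hmn
    rw [Finset.sum_Icc_succ_top (by omega), ih (by omega), Nat.cast_succ, add_sub_cancel_right]
    rw [Nat.cast_zero, zero_div] at h0
    exact intervalIntegral.integral_add_adjacent_intervals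
      (hf.intervalIntegrable_of_mem_Icc h0 hm)
      (hf.intervalIntegrable_of_mem_Icc hm (by simpa using hm1))

theorem sum_intervalIntegral_Icc_div_le {f : ℝ → ℝ} (hf0 : ∀ x, 0 ≤ f x)
    (hf : IntegrableOn f (Icc 0 1)) {m n : ℕ} (hmn : m ≤ n) :
    ∑ k ∈ Finset.Icc 1 m, ∫ x in ((k : ℝ) - 1) / n..(k : ℝ) / n, f x ≤
      ∫ x in 0..1, f x := by
  rw [sum_intervalIntegral_Icc_div hf hmn]
  exact intervalIntegral.integral_mono_interval le_rfl (natCast_div_natCast_mem_Icc hmn).1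
    (natCast_div_natCast_mem_Icc hmn).2 (Eventually.of_forall hf0)
    (hf.intervalIntegrable_of_mem_Icc (by simp) (by simp))

theorem sum_abs_intervalIntegral_le_of_sign_ne {Q : ℝ → ℝ}
    (hQ : MemLp Q 2 (volume.restrict (Icc 0 1))) {n : ℕ} {E : Finset ℝ}
    (hE : E ⊆ (Finset.Icc 1 (n - 1)).image (↑))
    (hsign : ∀ i ∈ E, ∃ t ∈ Icc ((i - 1) / n) (i / n),
      Real.sign (∫ x in 0..t, Q x) ≠ Real.sign (∫ x in 0..i / n, Q x)) :
    ∑ i ∈ E, |∫ x in 0..i / n, Q x| ≤ √(∫ x in 0..1, Q x ^ 2) := by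
  set b : ℝ → ℝ := fun i => ∫ x in (i - 1) / n..i / n, Q x ^ 2
  have hb : ∀ i, 0 ≤ b i := fun i =>
    intervalIntegral.integral_nonneg (div_le_div_of_nonneg_right (by linarith) n.cast_nonneg)
      fun x _ => sq_nonneg (Q x)
  have hterm : ∀ i ∈ E, |∫ x in 0..i / n, Q x| ≤ √(1 / n) * √(b i) := by
    intro i hi
    obtain ⟨t, ht, hne⟩ := hsign i hi
    obtain ⟨k, hk, rfl⟩ := Finset.mem_image.1 (hE hi)
    rw [Finset.mem_Icc] at hk
    have hlo : ((k : ℝ) - 1) / n ∈ Icc (0 : ℝ) 1 := by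
      simpa [Nat.cast_sub hk.1] using
        natCast_div_natCast_mem_Icc (n := n) (k := k - 1) (by omega)
    have hhi := natCast_div_natCast_mem_Icc (n := n) (k := k) (by omega)
    have hQk : MemLp Q 2 (volume.restrict (Icc 0 ((k : ℝ) / n))) :=
      hQ.mono_measure (Measure.restrict_mono (Icc_subset_Icc le_rfl hhi.2) le_rfl)
    have := abs_intervalIntegral_le_of_sign_ne hQk hlo.1 ht.1 ht.2 hne
    rwa [show (k : ℝ) / n - (k - 1) / n = 1 / n by ring] at this
  have hcard : ∑ _i ∈ E, (1 / n : ℝ) ≤ 1 := by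
    have : E.card ≤ n :=
      (Finset.card_le_card hE).trans <| Finset.card_image_le.trans (by simp)
    rw [Finset.sum_const, nsmul_eq_mul, mul_one_div]
    exact div_le_one_of_le₀ (by exact_mod_cast this) n.cast_nonneg
  have hsumb : ∑ i ∈ E, b i ≤ ∫ x in 0..1, Q x ^ 2 :=
    calc ∑ i ∈ E, b i ≤ ∑ i ∈ (Finset.Icc 1 (n - 1)).image (↑), b i :=
          Finset.sum_le_sum_of_subset_of_nonneg hE fun i _ _ => hb i
      _ = ∑ k ∈ Finset.Icc 1 (n - 1), b k :=
          Finset.sum_image fun _ _ _ _ h => Nat.cast_injective h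
      _ ≤ ∫ x in 0..1, Q x ^ 2 :=
          sum_intervalIntegral_Icc_div_le (fun x => sq_nonneg (Q x)) hQ.integrable_sq
            (Nat.sub_le n 1)
  calc ∑ i ∈ E, |∫ x in 0..i / n, Q x| ≤ ∑ i ∈ E, √(1 / n) * √(b i) :=
        Finset.sum_le_sum hterm
    _ ≤ √(∑ _i ∈ E, (1 / n : ℝ)) * √(∑ i ∈ E, b i) :=
        Real.sum_sqrt_mul_sqrt_le E (fun _ => by positivity) hb
    _ ≤ √1 * √(∫ x in 0..1, Q x ^ 2) := by gcongr
    _ = √(∫ x in 0..1, Q x ^ 2) := by rw [Real.sqrt_one, one_mul]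

open scoped Classical in
theorem statement4_general (Q : ℝ → ℝ)
    (hQ : MemLp Q 2 (volume.restrict (Icc (0:ℝ) 1)))
    (n : ℕ) :
    ∑ i ∈ (Finset.Icc 1 (n - 1)).filter (fun i =>
        ∃ t ∈ Icc (((i:ℝ) - 1) / (n:ℝ)) ((i:ℝ) / (n:ℝ)),
          Real.sign (∫ x in (0:ℝ)..t, Q x) ≠
            Real.sign (∫ x in (0:ℝ)..((i:ℝ) / (n:ℝ)), Q x)),
      |∫ x in (0:ℝ)..((i:ℝ) / (n:ℝ)), Q x| ≤
      Real.sqrt (∫ x in (0:ℝ)..1, (Q x) ^ 2) := by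
  refine sum_abs_intervalIntegral_le_of_sign_ne hQ ((Finset.filter_subset _ _).trans ?_)
    fun i hi => (Finset.mem_filter.1 hi).2
  -- the index set is `Finset.Icc 1 (n - 1)` pushed to `ℝ` through the `Finset` monad
  intro i hi
  simpa using hi

open scoped Classical in
theorem statement4 (Q : ℝ → ℝ)
    (hQ : MemLp Q 2 (volume.restrict (Icc (0:ℝ) 1)))
    (n : ℕ) (hn : 2 ≤ n) :
    ∑ i ∈ (Finset.Icc 1 (n - 1)).filter (fun i =>
        ∃ t ∈ Icc (((i:ℝ) - 1) / (n:ℝ)) ((i:ℝ) / (n:ℝ)),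
          Real.sign (∫ x in (0:ℝ)..t, Q x) ≠
            Real.sign (∫ x in (0:ℝ)..((i:ℝ) / (n:ℝ)), Q x)),
      |∫ x in (0:ℝ)..((i:ℝ) / (n:ℝ)), Q x| ≤
      Real.sqrt (∫ x in (0:ℝ)..1, (Q x) ^ 2) :=
  statement4_general Q hQ n
end

section
/- There exist an orthonormal system (φ_n) on [0,1] and a real number γ with 0 < γ < 1/2 such that, for the constant function f₀(x) = 1 on [0,1], the series Σ_{n=1}^∞ n^γ |c_n(f₀)| diverges to +∞, where c_n(f₀) = ∫_0^1 φ_n(x) dx. -/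
/-!
Take `φₙ = √(n(n+1)) · 𝟙_(1/(n+1), 1/n]`, the normalized indicators of the pairwise disjoint
intervals `(1/(n+1), 1/n] ⊆ [0,1]`. Disjointness of supports gives orthonormality, and
`cₙ(1) = √(1/n - 1/(n+1)) ≥ 1/(n+1)`, so `Σ n^γ |cₙ(1)|` dominates the harmonic series for every
`γ ≥ 0`.
-/

open MeasureTheory Set Filter

noncomputable section

open Function

def normalizedIndicator (s : Set ℝ) : ℝ → ℝ :=
  s.indicator fun _ => (√(volume.real s))⁻¹

lemma intervalIntegral_indicator_const {s : Set ℝ} (hs : MeasurableSet s)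
    (hsub : s ⊆ Ioc 0 1) (c : ℝ) :
    ∫ x in (0:ℝ)..1, s.indicator (fun _ => c) x = volume.real s * c := by
  rw [intervalIntegral.integral_of_le zero_le_one, setIntegral_indicator hs,
    inter_eq_self_of_subset_right hsub, setIntegral_const, smul_eq_mul]

lemma intervalIntegral_normalizedIndicator {s : Set ℝ} (hs : MeasurableSet s)
    (hsub : s ⊆ Ioc 0 1) :
    ∫ x in (0:ℝ)..1, normalizedIndicator s x = √(volume.real s) := by
  rw [normalizedIndicator, intervalIntegral_indicator_const hs hsub, ← div_eq_mul_inv,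
    Real.div_sqrt]

theorem isONS_normalizedIndicator {s : ℕ → Set ℝ} (hs : ∀ n, MeasurableSet (s n))
    (hsub : ∀ n, s n ⊆ Ioc 0 1) (hdisj : Pairwise (Disjoint on s))
    (hpos : ∀ n, 1 ≤ n → 0 < volume.real (s n)) :
    IsONS fun n => normalizedIndicator (s n) := by
  refine ⟨fun n _ => memLp_indicator_const 2 (hs n) _ (Or.inr (measure_ne_top _ _)), ?_⟩
  intro n m hn _
  simp_rw [normalizedIndicator, ← inter_indicator_mul]
  split_ifs with h
  · subst h
    rw [inter_self, intervalIntegral_indicator_const (hs n) (hsub n), ← mul_inv,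
      Real.mul_self_sqrt measureReal_nonneg, mul_inv_cancel₀ (hpos n hn).ne']
  · rw [(hdisj h).inter_eq, indicator_empty]
    simp

-- `harmonicInterval 0 = Ioc 1 0` is empty, since `(0:ℝ)⁻¹ = 0`.
def harmonicInterval (n : ℕ) : Set ℝ := Ioc ((n:ℝ) + 1)⁻¹ (n:ℝ)⁻¹

lemma measurableSet_harmonicInterval (n : ℕ) : MeasurableSet (harmonicInterval n) :=
  measurableSet_Ioc

lemma harmonicInterval_subset (n : ℕ) : harmonicInterval n ⊆ Ioc 0 1 :=
  Ioc_subset_Ioc (inv_nonneg.2 (n.cast_add_one_pos (α := ℝ)).le) (Nat.cast_inv_le_one n)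

lemma pairwise_disjoint_harmonicInterval : Pairwise (Disjoint on harmonicInterval) := by
  refine (pairwise_disjoint_on _).2 fun m n hmn => (Ioc_disjoint_Ioc_of_le ?_).symm
  exact inv_anti₀ (by positivity) (by exact_mod_cast hmn)

lemma volume_real_harmonicInterval {n : ℕ} (hn : 0 < n) :
    volume.real (harmonicInterval n) = (n:ℝ)⁻¹ - ((n:ℝ) + 1)⁻¹ :=
  Real.volume_real_Ioc_of_le (inv_anti₀ (by positivity) (by linarith))

lemma inv_succ_le_sqrt_volume_real_harmonicInterval {n : ℕ} (hn : 0 < n) :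
    ((n:ℝ) + 1)⁻¹ ≤ √(volume.real (harmonicInterval n)) := by
  have hn' : (0:ℝ) < n := by exact_mod_cast hn
  rw [Real.le_sqrt' (by positivity), volume_real_harmonicInterval hn]
  field_simp
  linarith

theorem not_summable_rpow_mul_sqrt_volume_real_harmonicInterval {γ : ℝ} (hγ : 0 ≤ γ) :
    ¬ Summable fun n : ℕ => ((n:ℝ) + 1) ^ γ * √(volume.real (harmonicInterval (n + 1))) := by
  intro h
  refine (Real.summable_one_div_nat_add_rpow 2 1).not.2 (lt_irrefl 1) <|
    h.of_nonneg_of_le (fun n => by positivity) fun n => ?_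
  have hterm : ((n:ℝ) + 2)⁻¹ ≤ √(volume.real (harmonicInterval (n + 1))) := by
    simpa [add_assoc, one_add_one_eq_two] using
      inv_succ_le_sqrt_volume_real_harmonicInterval n.succ_pos
  rw [Real.rpow_one, abs_of_pos (by positivity), one_div]
  exact hterm.trans <| le_mul_of_one_le_left (Real.sqrt_nonneg _) <|
    Real.one_le_rpow (by linarith [n.cast_nonneg (α := ℝ)]) hγ

theorem statement5 :
    ∃ φ : ℕ → ℝ → ℝ, IsONS φ ∧ ∃ γ : ℝ, 0 < γ ∧ γ < 1 / 2 ∧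
      ¬ Summable (fun n : ℕ =>
        ((n:ℝ) + 1) ^ γ * |∫ x in (0:ℝ)..1, φ (n + 1) x|) := by
  refine ⟨fun n => normalizedIndicator (harmonicInterval n),
    isONS_normalizedIndicator measurableSet_harmonicInterval harmonicInterval_subset
      pairwise_disjoint_harmonicInterval fun n hn => ?_,
    1 / 4, by norm_num, by norm_num, ?_⟩
  · exact Real.sqrt_pos.1 <| (inv_pos.2 (by positivity)).trans_le
      (inv_succ_le_sqrt_volume_real_harmonicInterval hn)
  · simp_rw [intervalIntegral_normalizedIndicator (measurableSet_harmonicInterval _)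
        (harmonicInterval_subset _),
      abs_of_nonneg (Real.sqrt_nonneg _)]
    exact not_summable_rpow_mul_sqrt_volume_real_harmonicInterval (by norm_num)
end
end
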